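/- arXiv:2601.01019 — 7 statements merged into one kernel-verified Lean document; each statement's English description precedes it below -/
import Mathlib

section
/- The real number e (Euler's number, the base of the natural exponential function) is transcendental over the rationals: there is no nonzero polynomial with integer coefficients having e as a root. -/
/-!
Hermite's argument, through the estimate `LindemannWeierstrass.exp_polynomial_approx`: for
`f = ∏ i, (X - kᵢ)` and every large prime `p` there are an integer `nₚ` prime to `p` and
`gₚ ∈ ℤ[X]` such that each `nₚ e^{kᵢ}` lies within `c ^ p / (p - 1)!` of the integer `p gₚ(kᵢ)`.
A relation `a₀ + ∑ aᵢ e^{kᵢ} = 0` with `a₀ ≠ 0` and all `kᵢ ≠ 0` then yields the integer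
`a₀ nₚ + p ∑ aᵢ gₚ(kᵢ)`, which is prime to `p`, hence nonzero, yet of absolute value less than `1`
once `p` is large. Dividing an algebraic relation for `e` by its lowest power of `e` puts it in
this form, with `a₀` the trailing coefficient.
-/

open Polynomial Finset Filter
open scoped Nat

theorem exists_prime_gt_mul_pow_lt_factorial {K : Type*} [Ring K] [LinearOrder K]
    [IsStrictOrderedRing K] [FloorSemiring K] (A c : K) (m : ℕ) :
    ∃ p, p.Prime ∧ m < p ∧ A * c ^ p < (p - 1)! :=
  ((Nat.frequently_atTop_iff_infinite.mpr Nat.infinite_setOfPred_prime).and_eventually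
    ((eventually_gt_atTop m).and (FloorSemiring.eventually_mul_pow_lt_factorial_sub A c 1))).exists

theorem eval_zero_prod_X_sub_C_ne_zero {ι R : Type*} [CommRing R] [IsDomain R]
    (t : Finset ι) (k : ι → R) (hk : ∀ i ∈ t, k i ≠ 0) :
    (∏ j ∈ t, (X - C (k j))).eval 0 ≠ 0 := by
  rw [eval_prod]
  exact prod_ne_zero_iff.mpr fun i hi => by simpa using hk i hi

section IntegerExponents

variable {ι : Type*} (t : Finset ι) (k : ι → ℤ)

theorem intCast_mem_aroots_prod_X_sub_C {i : ι} (hi : i ∈ t) :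
    (k i : ℂ) ∈ (∏ j ∈ t, (X - C (k j))).aroots ℂ := by
  rw [mem_aroots, map_prod]
  exact ⟨(monic_prod_of_monic _ _ fun j _ => monic_X_sub_C (k j)).ne_zero,
    prod_eq_zero hi (by simp)⟩

theorem intCast_add_sum_mul_exp_ne_zero (hk : ∀ i ∈ t, k i ≠ 0) {a₀ : ℤ} (ha₀ : a₀ ≠ 0)
    (a : ι → ℤ) : (a₀ : ℂ) + ∑ i ∈ t, a i * Complex.exp (k i) ≠ 0 := by
  intro hsum
  obtain ⟨c, hc⟩ := LindemannWeierstrass.exp_polynomial_approx _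
    (eval_zero_prod_X_sub_C_ne_zero t k hk)
  obtain ⟨p, hp, hp_gt, hp_large⟩ := exists_prime_gt_mul_pow_lt_factorial
    (∑ i ∈ t, |(a i : ℝ)|) c (max ((∏ j ∈ t, (X - C (k j))).eval 0).natAbs a₀.natAbs)
  obtain ⟨n, hn, g, -, happrox⟩ := hc p (lt_of_le_of_lt (le_max_left _ _) hp_gt) hp
  set N : ℤ := a₀ * n + p * ∑ i ∈ t, a i * g.eval (k i)
  have hN : N ≠ 0 := by
    intro hN0
    have hdvd : (p : ℤ) ∣ a₀ * n := by
      rw [← dvd_add_left (dvd_mul_right (p : ℤ) _)]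
      exact hN0 ▸ dvd_zero _
    rcases Int.Prime.dvd_mul' hp hdvd with h | h
    · exact (lt_of_le_of_lt (le_max_right _ _) hp_gt).not_ge
        (Nat.le_of_dvd (Int.natAbs_pos.mpr ha₀) (Int.natCast_dvd.mp h))
    · exact hn h
  have hN_eq : (N : ℂ) = -∑ i ∈ t, a i * (n • Complex.exp (k i) - p • aeval (k i : ℂ) g) := by
    have haeval (z : ℤ) : aeval (z : ℂ) g = g.eval z := by
      simpa using aeval_algebraMap_apply_eq_algebraMap_eval (A := ℂ) z g
    simp only [N, haeval, zsmul_eq_mul, nsmul_eq_mul, mul_sub, sum_sub_distrib,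
      mul_left_comm ((a _ : ℤ) : ℂ), ← mul_sum]
    push_cast
    linear_combination (n : ℂ) * hsum
  have hN_le : ‖(N : ℂ)‖ ≤ (∑ i ∈ t, |(a i : ℝ)|) * (c ^ p / (p - 1)!) := by
    rw [hN_eq, norm_neg, sum_mul]
    refine (norm_sum_le _ _).trans (sum_le_sum fun i hi => ?_)
    rw [norm_mul, Complex.norm_intCast]
    exact mul_le_mul_of_nonneg_left (happrox (intCast_mem_aroots_prod_X_sub_C t k hi))
      (abs_nonneg _)
  have hN_ge : (1 : ℝ) ≤ |(N : ℝ)| := by exact_mod_cast Int.one_le_abs hN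
  rw [Complex.norm_intCast, ← mul_div_assoc, le_div_iff₀ (by positivity)] at hN_le
  nlinarith

end IntegerExponents

theorem exp_neg_mul_aeval_exp_one (P : ℤ[X]) (hP : P ≠ 0) :
    Complex.exp (-P.natTrailingDegree) * aeval (Complex.exp 1) P =
      P.trailingCoeff + ∑ i ∈ P.support.erase P.natTrailingDegree,
        P.coeff i * Complex.exp ((i : ℤ) - P.natTrailingDegree : ℤ) := by
  have hterm (i : ℕ) : Complex.exp (-P.natTrailingDegree) * (P.coeff i * Complex.exp 1 ^ i) =
      P.coeff i * Complex.exp ((i : ℤ) - P.natTrailingDegree : ℤ) := by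
    rw [← Complex.exp_nat_mul, mul_one, mul_left_comm, ← Complex.exp_add]
    push_cast
    ring_nf
  rw [aeval_def, eval₂_eq_sum, sum_def, mul_sum,
    ← add_sum_erase _ _ (natTrailingDegree_mem_support_of_nonzero hP)]
  simp only [hterm, sub_self, Int.cast_zero, Complex.exp_zero, mul_one, algebraMap_int_eq,
    eq_intCast]
  rfl

/-- The real number e = exp 1 is transcendental over the rationals. -/
theorem e_transcendental : Transcendental ℚ (Real.exp 1) := by
  intro halg
  obtain ⟨P, hP0, hPe⟩ := (IsFractionRing.isAlgebraic_iff ℤ ℚ ℝ).mpr halg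
  have hPe_complex : aeval (Complex.exp 1) P = 0 := by
    have : Complex.exp 1 = algebraMap ℝ ℂ (Real.exp 1) := by simp [Complex.ofReal_exp]
    rw [this, aeval_algebraMap_apply, hPe, map_zero]
  refine intCast_add_sum_mul_exp_ne_zero (P.support.erase P.natTrailingDegree)
    (fun i => (i : ℤ) - P.natTrailingDegree)
    (fun i hi => sub_ne_zero.mpr (by exact_mod_cast (mem_erase.mp hi).1))
    (trailingCoeff_nonzero_iff_nonzero.mpr hP0) P.coeff ?_
  rw [← exp_neg_mul_aeval_exp_one P hP0, hPe_complex, mul_zero]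
end

section
/- Let A be a rational function in ℂ(X) whose reduced denominator does not vanish at 0 (so that A expands as a formal power series at 0), let p ∈ ℂ[X] be a polynomial, let m ∈ ℕ, and let c ∈ ℂ be nonzero. Then the rational function B = p·A + c·X^m·A′ (where A′ is the derivative of A) has no pole of order exactly 1: either B is a polynomial, or every pole of B has order at least 2. -/
open Polynomial

/-- The formal derivative of a rational function over ℂ, defined via the
quotient rule on its reduced numerator and denominator. -/
noncomputable def RatFunc.deriv' (A : RatFunc ℂ) : RatFunc ℂ :=
  RatFunc.mk (Polynomial.derivative A.num * A.denom - A.num * Polynomial.derivative A.denom)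
    (A.denom ^ 2)

/-- If `A ∈ ℂ(X)` has a reduced denominator not vanishing at `0`, `p ∈ ℂ[X]`,
`m ∈ ℕ`, and `c ≠ 0`, then `B = p·A + c·X^m·A′` has no pole of order exactly 1:
at every point `α ∈ ℂ`, the order of vanishing of the reduced denominator of `B`
is never equal to 1. -/
theorem no_simple_pole (A : RatFunc ℂ) (hA : A.denom.eval 0 ≠ 0)
    (p : Polynomial ℂ) (m : ℕ) (c : ℂ) (hc : c ≠ 0) :
    ∀ α : ℂ,
      (algebraMap (Polynomial ℂ) (RatFunc ℂ) p * A
          + RatFunc.C c * RatFunc.X ^ m * A.deriv').denom.rootMultiplicity α ≠ 1 := by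
  intro α h1
  set n := A.num with hn
  set d := A.denom with hd
  have hd0 : d ≠ 0 := A.denom_ne_zero
  set B : RatFunc ℂ := algebraMap (Polynomial ℂ) (RatFunc ℂ) p * A
      + RatFunc.C c * RatFunc.X ^ m * A.deriv' with hB
  set N : Polynomial ℂ := p * n * d
      + Polynomial.C c * X ^ m * (derivative n * d - n * derivative d) with hN
  have hd2 : (d ^ 2 : Polynomial ℂ) ≠ 0 := pow_ne_zero 2 hd0
  have halg : ∀ q : Polynomial ℂ, q ≠ 0 → algebraMap (Polynomial ℂ) (RatFunc ℂ) q ≠ 0 :=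
    fun q hq => RatFunc.algebraMap_ne_zero hq
  have hpA : algebraMap (Polynomial ℂ) (RatFunc ℂ) p * A
      = algebraMap (Polynomial ℂ) (RatFunc ℂ) (p * n)
        / algebraMap (Polynomial ℂ) (RatFunc ℂ) d := by
    rw [map_mul, mul_div_assoc]
    congr 1
    exact (RatFunc.num_div_denom A).symm
  have key : B = algebraMap (Polynomial ℂ) (RatFunc ℂ) N
      / algebraMap (Polynomial ℂ) (RatFunc ℂ) (d ^ 2) := by
    rw [hB, hpA, RatFunc.deriv', RatFunc.mk_eq_div, ← RatFunc.algebraMap_C c,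
      ← RatFunc.algebraMap_X, ← hn, ← hd, hN]
    rw [← mul_div_assoc, ← map_pow, ← map_mul, ← map_mul,
      div_add_div _ _ (halg _ hd0) (halg _ hd2), div_eq_div_iff
      (mul_ne_zero (halg _ hd0) (halg _ hd2)) (halg _ hd2)]
    simp only [← map_mul, ← map_add]
    congr 1
    ring
  -- (X - α) divides B.denom
  have hdvdB : (X - Polynomial.C α) ∣ B.denom := by
    have := Polynomial.pow_rootMultiplicity_dvd B.denom α
    rw [h1, pow_one] at this
    exact this
  -- B.denom divides d^2
  have hBd : B.denom ∣ d ^ 2 := (RatFunc.denom_dvd hd2).mpr ⟨N, key⟩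
  -- (X - α) divides d
  have hdvdd : (X - Polynomial.C α) ∣ d := by
    have h2 : (X - Polynomial.C α) ∣ d ^ 2 := hdvdB.trans hBd
    exact (Polynomial.prime_X_sub_C α).dvd_of_dvd_pow h2
  set k := d.rootMultiplicity α with hk
  have hk1 : 1 ≤ k := by
    rw [hk, Polynomial.le_rootMultiplicity_iff hd0, pow_one]; exact hdvdd
  -- α ≠ 0
  have hα : α ≠ 0 := by
    intro h
    subst h
    exact hA (Polynomial.dvd_iff_isRoot.mp hdvdd)
  -- n is not divisible by (X - α)
  have hcop : IsCoprime n d := A.isCoprime_num_denom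
  have hnd : ¬ (X - Polynomial.C α) ∣ n := by
    intro hdvd
    have : IsUnit (X - Polynomial.C α) := hcop.isUnit_of_dvd' hdvd hdvdd
    exact (Polynomial.prime_X_sub_C α).not_unit this
  have hn0 : n ≠ 0 := by
    intro h
    exact hnd (by rw [h]; exact dvd_zero _)
  -- d is nonconstant, so derivative d ≠ 0
  have hd' : derivative d ≠ 0 := by
    intro h
    have := Polynomial.natDegree_eq_zero_of_derivative_eq_zero h
    have hdeg : 1 ≤ d.natDegree := by
      have := Polynomial.natDegree_le_of_dvd hdvdd hd0
      simpa [Polynomial.natDegree_X_sub_C] using this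
    omega
  -- N ≠ 0
  have hN0 : N ≠ 0 := by
    intro h
    have hB0 : B = 0 := by rw [key, h, map_zero, zero_div]
    rw [hB0] at h1
    rw [RatFunc.denom_zero, Polynomial.rootMultiplicity_eq_zero (by simp [Polynomial.IsRoot])]
      at h1
    exact one_ne_zero h1.symm
  have hBne : B ≠ 0 := by
    intro hB0
    rw [hB0] at h1
    rw [RatFunc.denom_zero, Polynomial.rootMultiplicity_eq_zero (by simp [Polynomial.IsRoot])]
      at h1
    exact one_ne_zero h1.symm
  -- cross multiplication: B.num * d^2 = N * B.denom
  have hcross : B.num * d ^ 2 = N * B.denom := by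
    have h2 := (RatFunc.num_div_denom B).trans key
    have h3 := (div_eq_div_iff (halg _ B.denom_ne_zero) (halg _ hd2)).mp h2
    apply RatFunc.algebraMap_injective ℂ
    rw [map_mul, map_mul]
    exact h3
  -- root multiplicities
  have hBnum0 : B.num.rootMultiplicity α = 0 := by
    apply Polynomial.rootMultiplicity_eq_zero
    intro hroot
    have hdvdn : (X - Polynomial.C α) ∣ B.num := Polynomial.dvd_iff_isRoot.mpr hroot
    have : IsUnit (X - Polynomial.C α) :=
      B.isCoprime_num_denom.isUnit_of_dvd' hdvdn hdvdB
    exact (Polynomial.prime_X_sub_C α).not_unit this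
  have hBnum_ne : B.num ≠ 0 := RatFunc.num_ne_zero hBne
  have hmultN : N.rootMultiplicity α = 2 * k - 1 := by
    have h1' := congrArg (Polynomial.rootMultiplicity α) hcross
    rw [Polynomial.rootMultiplicity_mul (mul_ne_zero hBnum_ne hd2),
      Polynomial.rootMultiplicity_mul (mul_ne_zero hN0 B.denom_ne_zero),
      hBnum0, h1, sq, Polynomial.rootMultiplicity_mul (mul_ne_zero hd0 hd0), ← hk] at h1'
    omega
  -- (X - α)^k divides N
  have hkN : (X - Polynomial.C α) ^ k ∣ N := by
    rw [← Polynomial.le_rootMultiplicity_iff hN0, hmultN]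
    omega
  -- each of the other terms of N is divisible by (X - α)^k
  have hkd : (X - Polynomial.C α) ^ k ∣ d := Polynomial.pow_rootMultiplicity_dvd d α
  have hrewrite : Polynomial.C c * X ^ m * (n * derivative d)
      = p * n * d + Polynomial.C c * X ^ m * (derivative n * d) - N := by
    rw [hN]; ring
  have hkdvd : (X - Polynomial.C α) ^ k ∣ Polynomial.C c * X ^ m * (n * derivative d) := by
    rw [hrewrite]
    exact dvd_sub (dvd_add (hkd.mul_left (p * n))
      ((hkd.mul_left (derivative n)).mul_left (Polynomial.C c * X ^ m))) hkN
  -- but the root multiplicity of that term is k - 1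
  have hCc0 : (Polynomial.C c : Polynomial ℂ) ≠ 0 := by simpa using hc
  have hXm0 : ((X : Polynomial ℂ) ^ m) ≠ 0 := pow_ne_zero m Polynomial.X_ne_zero
  have hterm0 : (Polynomial.C c * X ^ m * (n * derivative d)) ≠ 0 :=
    mul_ne_zero (mul_ne_zero hCc0 hXm0) (mul_ne_zero hn0 hd')
  have hmultterm : (Polynomial.C c * X ^ m * (n * derivative d)).rootMultiplicity α = k - 1 := by
    rw [Polynomial.rootMultiplicity_mul hterm0,
      Polynomial.rootMultiplicity_mul (mul_ne_zero hn0 hd'),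
      Polynomial.rootMultiplicity_mul (mul_ne_zero hCc0 hXm0)]
    have hCc : (Polynomial.C c).rootMultiplicity α = 0 :=
      Polynomial.rootMultiplicity_eq_zero (by simp [Polynomial.IsRoot, hc])
    have hX : ((X : Polynomial ℂ) ^ m).rootMultiplicity α = 0 :=
      Polynomial.rootMultiplicity_eq_zero (by simp [Polynomial.IsRoot, hα])
    have hnα : n.rootMultiplicity α = 0 :=
      Polynomial.rootMultiplicity_eq_zero fun h => hnd (Polynomial.dvd_iff_isRoot.mpr h)
    have hdroot : d.IsRoot α := Polynomial.dvd_iff_isRoot.mp hdvdd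
    rw [hCc, hX, hnα, Polynomial.derivative_rootMultiplicity_of_root hdroot, ← hk]
    omega
  have hfinal : k ≤ k - 1 := by
    rw [← hmultterm, Polynomial.le_rootMultiplicity_iff hterm0]
    exact hkdvd
  omega
end

section
/- Let t ∈ ℕ, let b₁, …, b_t be nonzero integers, and let α₁, …, α_t be pairwise distinct natural numbers. For n ∈ ℕ₀ define the integers uₙ = b₁α₁ⁿ + ⋯ + b_tα_tⁿ and vₙ = Σ_{r=0}^{n} (n!/r!)·u_r. For k, n ∈ ℕ₀ define vₙ(k) to be the coefficient of Xⁿ in the formal power series (∏_{j=1}^{t}(1 − α_jX))^k · Σ_{n≥0} vₙXⁿ. Then for all k, n ∈ ℕ₀ with n ≥ t·k, the integer vₙ(k) is divisible by k!. -/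
/-!
Put `gₐ(n) = Σ_{r ≤ n} (n!/r!) aʳ = Σₛ n(n-1)⋯(n-s+1) aⁿ⁻ˢ`, so that `v = Σⱼ bⱼ g_{αⱼ}`
and `Σₙ gₐ(n) Xⁿ = Σₛ s! Xˢ / (1 - aX)ˢ⁺¹`. Multiplying the `s`-th term by `(1 - aX)ᵏ`
gives `(s!/(s-k)!) Xᵏ / (1 - aX)ˢ⁻ᵏ⁺¹` when `s ≥ k`, all of whose coefficients are
divisible by `k!`, and the polynomial `s! Xˢ (1 - aX)ᵏ⁻ˢ⁻¹` of degree `< k` when `s < k`.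
For `a = αⱼ` the remaining factor `∏_{i ≠ j} (1 - αᵢX)ᵏ` has degree `(t-1)k`, so in the
second case the coefficient of `Xⁿ` vanishes for `n ≥ tk`.
-/

open Polynomial PowerSeries Finset

namespace PowerSeries

variable {R : Type*} [CommRing R]

theorem coeff_mul_eq_of_coeff_eq {φ ψ : R⟦X⟧} {n : ℕ}
    (h : ∀ m ≤ n, coeff m φ = coeff m ψ) (χ : R⟦X⟧) : coeff n (χ * φ) = coeff n (χ * ψ) := by
  simp only [coeff_mul]
  refine sum_congr rfl fun p hp => ?_
  rw [h p.2 (HasAntidiagonal.antidiagonal.snd_le hp)]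

/-- The expansion of `s! Xˢ / (1 - a X)ˢ⁺¹`. -/
def descFactorialSeries (a : R) (s : ℕ) : R⟦X⟧ :=
  mk fun n => (n.descFactorial s : R) * a ^ (n - s)

theorem one_sub_C_mul_X_mul_descFactorialSeries_zero (a : R) :
    (1 - C a * X) * descFactorialSeries a 0 = 1 := by
  have h := congrArg (rescale a) (mk_one_mul_one_sub_eq_one R)
  rw [map_mul, map_sub, map_one, rescale_X, rescale_mk] at h
  rw [mul_comm, ← h, descFactorialSeries]
  congr 2
  ext n
  simp

theorem one_sub_C_mul_X_mul_descFactorialSeries_succ (a : R) (s : ℕ) :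
    (1 - C a * X) * descFactorialSeries a (s + 1) =
      C (s + 1 : R) * X * descFactorialSeries a s := by
  ext (_ | m)
  · simp [descFactorialSeries, sub_mul]
  rw [mul_assoc, coeff_C_mul, coeff_succ_X_mul, sub_mul, one_mul, map_sub, mul_assoc, coeff_C_mul,
    coeff_succ_X_mul]
  simp only [descFactorialSeries, coeff_mk]
  rcases lt_or_ge m s with hms | hsm
  · rw [Nat.descFactorial_eq_zero_iff_lt.mpr hms, Nat.descFactorial_eq_zero_iff_lt.mpr (by omega),
      Nat.descFactorial_eq_zero_iff_lt.mpr (by omega)]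
    simp
  obtain ⟨d, rfl⟩ := Nat.exists_eq_add_of_le hsm
  rw [Nat.succ_descFactorial_succ, Nat.descFactorial_succ, show s + d + 1 - (s + 1) = d by omega,
    show s + d - s = d by omega, show s + d - (s + 1) = d - 1 by omega]
  rcases d with _ | d
  · simp
  · push_cast
    ring

theorem one_sub_C_mul_X_pow_mul_descFactorialSeries (a : R) {j s : ℕ} (h : j ≤ s) :
    (1 - C a * X) ^ j * descFactorialSeries a s =
      C (s.descFactorial j : R) * X ^ j * descFactorialSeries a (s - j) := by
  induction j with
  | zero => simp
  | succ j ih =>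
    obtain ⟨d, hd⟩ : ∃ d, s - j = d + 1 := ⟨s - j - 1, by omega⟩
    rw [pow_succ', mul_assoc, ih (by omega), hd, mul_left_comm,
      one_sub_C_mul_X_mul_descFactorialSeries_succ, Nat.descFactorial_succ,
      show s - (j + 1) = d by omega, show s - j = d + 1 by omega]
    push_cast
    rw [map_mul]
    ring

theorem one_sub_C_mul_X_pow_add_mul_descFactorialSeries (a : R) (s m : ℕ) :
    (1 - C a * X) ^ (s + 1 + m) * descFactorialSeries a s =
      ((Polynomial.C (s.factorial : R) * Polynomial.X ^ s *
        (1 - Polynomial.C a * Polynomial.X) ^ m : R[X]) : R⟦X⟧) := by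
  have h := one_sub_C_mul_X_pow_mul_descFactorialSeries a (le_refl s)
  rw [Nat.descFactorial_self, Nat.sub_self] at h
  calc (1 - C a * X) ^ (s + 1 + m) * descFactorialSeries a s
      = (1 - C a * X) ^ m *
          ((1 - C a * X) * ((1 - C a * X) ^ s * descFactorialSeries a s)) := by
        ring
    _ = (1 - C a * X) ^ m * (C (s.factorial : R) * X ^ s *
          ((1 - C a * X) * descFactorialSeries a 0)) := by
        rw [h]; ring
    _ = _ := by
        rw [one_sub_C_mul_X_mul_descFactorialSeries_zero]
        push_cast
        ring

theorem factorial_dvd_coeff_mul_one_sub_C_mul_X_pow_mul_descFactorialSeries (Q : R[X]) (a : R)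
    {k n : ℕ} (s : ℕ) (hn : Q.natDegree + k ≤ n) :
    (k.factorial : R) ∣
      coeff n ((Q : R⟦X⟧) * ((1 - C a * X) ^ k * descFactorialSeries a s)) := by
  rcases lt_or_ge s k with hsk | hks
  · obtain ⟨m, rfl⟩ : ∃ m, k = s + 1 + m := ⟨k - (s + 1), by omega⟩
    rw [one_sub_C_mul_X_pow_add_mul_descFactorialSeries, ← Polynomial.coe_mul,
      Polynomial.coeff_coe, Polynomial.coeff_eq_zero_of_natDegree_lt]
    · exact dvd_zero _
    have : (Polynomial.C (s.factorial : R) * Polynomial.X ^ s *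
        (1 - Polynomial.C a * Polynomial.X) ^ m).natDegree ≤ s + m := by compute_degree
    exact natDegree_mul_le.trans_lt (by omega)
  · rw [one_sub_C_mul_X_pow_mul_descFactorialSeries a hks, mul_assoc, mul_left_comm, coeff_C_mul]
    exact dvd_mul_of_dvd_left (Nat.cast_dvd_cast (Nat.factorial_dvd_descFactorial s k)) _

theorem sum_range_coeff_descFactorialSeries (a : R) {m N : ℕ} (h : m < N) :
    ∑ s ∈ range N, coeff m (descFactorialSeries a s) =
      ∑ r ∈ range (m + 1), (m.descFactorial (m - r) : R) * a ^ r := by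
  have hvanish : ∀ s ∈ range N, s ∉ range (m + 1) → coeff m (descFactorialSeries a s) = 0 :=
    fun s _ hs => by
      rw [descFactorialSeries, coeff_mk, Nat.descFactorial_eq_zero_iff_lt.mpr (by simpa using hs),
        Nat.cast_zero, zero_mul]
  rw [← sum_subset (range_subset_range.mpr h) hvanish, ← sum_range_reflect]
  refine sum_congr rfl fun r hr => ?_
  rw [descFactorialSeries, coeff_mk, Nat.succ_sub_one,
    Nat.sub_sub_self (Nat.lt_succ_iff.mp (mem_range.mp hr))]

theorem factorial_dvd_coeff_prod_pow_mul_descFactorialSeries {ι : Type*} [Fintype ι]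
    [DecidableEq ι] (a : ι → R) (j : ι) (s : ℕ) {k n : ℕ} (hn : Fintype.card ι * k ≤ n) :
    (k.factorial : R) ∣
      coeff n (((∏ i, (1 - Polynomial.C (a i) * Polynomial.X)) ^ k : R[X]) *
        descFactorialSeries (a j) s) := by
  set Q := ∏ i ∈ univ.erase j, (1 - Polynomial.C (a i) * Polynomial.X)
  have hsplit : (((∏ i, (1 - Polynomial.C (a i) * Polynomial.X)) ^ k : R[X]) : R⟦X⟧) =
      ((Q ^ k : R[X]) : R⟦X⟧) * (1 - C (a j) * X) ^ k := by
    rw [← mul_prod_erase univ _ (mem_univ j), mul_pow, Polynomial.coe_mul, mul_comm]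
    congr 1
    push_cast
    rfl
  have hQ : Q.natDegree + 1 ≤ Fintype.card ι := by
    rw [← card_univ, ← card_erase_add_one (mem_univ j), add_le_add_iff_right]
    calc Q.natDegree
        ≤ ∑ i ∈ univ.erase j, (1 - Polynomial.C (a i) * Polynomial.X).natDegree :=
          natDegree_prod_le _ _
      _ ≤ #(univ.erase j) • 1 := sum_le_card_nsmul _ _ 1 fun i _ => by compute_degree
      _ = #(univ.erase j) := mul_one _
  rw [hsplit, mul_assoc]
  refine factorial_dvd_coeff_mul_one_sub_C_mul_X_pow_mul_descFactorialSeries _ _ s ?_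
  calc (Q ^ k).natDegree + k ≤ k * (Q.natDegree + 1) := by
        rw [mul_add_one]; exact Nat.add_le_add_right natDegree_pow_le k
    _ ≤ k * Fintype.card ι := Nat.mul_le_mul_left k hQ
    _ ≤ n := by rwa [mul_comm]

end PowerSeries

theorem coeff_divisible_general
    (t : ℕ)
    (b : Fin t → ℤ)
    (α : Fin t → ℕ)
    (u v : ℕ → ℤ)
    (hu : ∀ n, u n = ∑ j, b j * (α j : ℤ) ^ n)
    (hv : ∀ n, v n = ∑ r ∈ Finset.range (n + 1), (n.descFactorial (n - r) : ℤ) * u r) :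
    ∀ k n : ℕ, t * k ≤ n →
      (k.factorial : ℤ) ∣
        PowerSeries.coeff (R := ℤ) n
          ((((∏ j, (1 - Polynomial.C (α j : ℤ) * Polynomial.X)) ^ k : Polynomial ℤ) :
            PowerSeries ℤ) * PowerSeries.mk v) := by
  intro k n hn
  have hv_expand : ∀ m ≤ n, coeff m (mk v) = coeff m
      (∑ j, PowerSeries.C (b j) * ∑ s ∈ range (n + 1), descFactorialSeries (α j : ℤ) s) := by
    intro m hm
    simp only [coeff_mk, hv, hu, map_sum, PowerSeries.coeff_C_mul,
      sum_range_coeff_descFactorialSeries _ (Nat.lt_succ_of_le hm)]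
    simp only [mul_sum]
    rw [sum_comm]
    simp only [mul_left_comm]
  rw [coeff_mul_eq_of_coeff_eq hv_expand, mul_sum, map_sum]
  refine dvd_sum fun j _ => ?_
  rw [mul_left_comm, PowerSeries.coeff_C_mul, mul_sum, map_sum]
  refine dvd_mul_of_dvd_right (dvd_sum fun s _ => ?_) _
  exact factorial_dvd_coeff_prod_pow_mul_descFactorialSeries _ j s (by simpa using hn)

/-- Divisibility of the coefficients `vₙ(k)` of `(∏ⱼ(1-αⱼX))^k · Σ vₙXⁿ`
by `k!` for `n ≥ t·k`, where `uₙ = Σ bⱼ αⱼⁿ` and `vₙ = Σ_{r≤n} (n!/r!) u_r`. -/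
theorem coeff_divisible
    (t : ℕ) (ht : 0 < t)
    (b : Fin t → ℤ) (hb : ∀ j, b j ≠ 0)
    (α : Fin t → ℕ) (hα : Function.Injective α)
    (u v : ℕ → ℤ)
    (hu : ∀ n, u n = ∑ j, b j * (α j : ℤ) ^ n)
    (hv : ∀ n, v n = ∑ r ∈ Finset.range (n + 1), (n.descFactorial (n - r) : ℤ) * u r) :
    ∀ k n : ℕ, t * k ≤ n →
      (k.factorial : ℤ) ∣
        PowerSeries.coeff (R := ℤ) n
          ((((∏ j, (1 - Polynomial.C (α j : ℤ) * Polynomial.X)) ^ k : Polynomial ℤ) :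
            PowerSeries ℤ) * PowerSeries.mk v) :=
  coeff_divisible_general t b α u v hu hv
end

section
/- Let (aₙ)_{n≥0} be a sequence of real numbers such that for every c ∈ ℝ one has aₙcⁿ → 0 as n → ∞, and let b ∈ ℝ. Then for every n ∈ ℕ₀ the series Σ_{m≥n} C(m,n)·aₘ·b^{m−n} converges absolutely, and the shifted coefficient sequence bₙ = Σ_{m≥n} C(m,n)·aₘ·b^{m−n} again satisfies bₙcⁿ → 0 as n → ∞ for every c ∈ ℝ. -/
open Filter

lemma choose_le_two_pow' (N k : ℕ) : N.choose k ≤ 2 ^ N := by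
  rcases le_or_gt k N with h | h
  · calc N.choose k ≤ ∑ i ∈ Finset.range (N + 1), N.choose i :=
        Finset.single_le_sum (fun i _ => Nat.zero_le _)
          (Finset.mem_range.mpr (Nat.lt_succ_of_le h))
      _ = 2 ^ N := Nat.sum_range_choose N
  · simp [Nat.choose_eq_zero_of_lt h]

lemma key_bound (a : ℕ → ℝ)
    (hconv : ∀ c : ℝ, Filter.Tendsto (fun n : ℕ => a n * c ^ n) Filter.atTop (nhds 0))
    (b c : ℝ) :
    ∃ M : ℝ, 0 ≤ M ∧ ∀ n m : ℕ,
      |((m + n).choose n : ℝ) * a (m + n) * b ^ m| ≤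
        M * (1 / 2) ^ m * (1 / (2 * (|c| + 1))) ^ n := by
  set s : ℝ := |b| + 1 with hs
  set t : ℝ := |c| + 1 with ht
  have hs1 : (1 : ℝ) ≤ s := le_add_of_nonneg_left (abs_nonneg b)
  have ht1 : (1 : ℝ) ≤ t := le_add_of_nonneg_left (abs_nonneg c)
  set R : ℝ := 4 * s * t with hR
  have hRpos : 0 < R := by positivity
  have hbdd : BddAbove (Set.range fun k : ℕ => |a k * R ^ k|) := by
    have := (hconv R).abs
    simp only [abs_zero] at this
    exact this.bddAbove_range
  obtain ⟨M, hM⟩ := hbdd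
  have hMk : ∀ k : ℕ, |a k| * R ^ k ≤ M := by
    intro k
    have := hM (Set.mem_range_self (f := fun k : ℕ => |a k * R ^ k|) k)
    rwa [abs_mul, abs_pow, abs_of_pos hRpos] at this
  have hM0 : 0 ≤ M := le_trans (by positivity) (hMk 0)
  refine ⟨M, hM0, fun n m => ?_⟩
  have hchoose : ((m + n).choose n : ℝ) ≤ 2 ^ (m + n) := by
    exact_mod_cast Nat.cast_le.mpr (choose_le_two_pow' (m + n) n)
  have h1 : |((m + n).choose n : ℝ) * a (m + n) * b ^ m| =
      ((m + n).choose n : ℝ) * |a (m + n)| * |b| ^ m := by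
    rw [abs_mul, abs_mul, abs_pow, Nat.abs_cast]
  rw [h1]
  have hb : |b| ≤ s := by rw [hs]; linarith
  have hkey : (2 : ℝ) ^ (m + n) * |b| ^ m * (2 ^ m * (2 * t) ^ n) ≤ R ^ (m + n) := by
    have h2 : |b| ≤ s * t := le_trans hb (le_mul_of_one_le_right (by linarith) ht1)
    have h3 : t ≤ s * t := le_mul_of_one_le_left (by linarith) hs1
    calc (2 : ℝ) ^ (m + n) * |b| ^ m * (2 ^ m * (2 * t) ^ n)
        = (4 * |b|) ^ m * (4 * t) ^ n := by
          rw [show (4 : ℝ) = 2 * 2 by norm_num]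
          simp only [mul_pow, pow_add]; ring
      _ ≤ (4 * (s * t)) ^ m * (4 * (s * t)) ^ n := by
          gcongr <;> first | positivity | linarith
      _ = R ^ (m + n) := by rw [hR, pow_add, mul_assoc]
  have hdenom : (0 : ℝ) < 2 ^ m * (2 * t) ^ n := by positivity
  rw [show M * (1 / 2 : ℝ) ^ m * (1 / (2 * t)) ^ n = M / (2 ^ m * (2 * t) ^ n) by
    rw [div_pow, div_pow, one_pow, one_pow]; field_simp]
  rw [le_div_iff₀ hdenom]
  calc ((m + n).choose n : ℝ) * |a (m + n)| * |b| ^ m * (2 ^ m * (2 * t) ^ n)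
      ≤ 2 ^ (m + n) * |a (m + n)| * |b| ^ m * (2 ^ m * (2 * t) ^ n) := by
        gcongr
      _ = |a (m + n)| * (2 ^ (m + n) * |b| ^ m * (2 ^ m * (2 * t) ^ n)) := by ring
      _ ≤ |a (m + n)| * R ^ (m + n) := mul_le_mul_of_nonneg_left hkey (abs_nonneg _)
      _ ≤ M := hMk (m + n)

/-- For a convergent `f = Σ aₙxⁿ` and `b ∈ ℝ`, the shifted coefficients
`bₙ = Σ_{m≥n} C(m,n)·aₘ·b^{m−n}` are given by absolutely convergent series and
form again a convergent power series. -/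
theorem shift_convergent (a : ℕ → ℝ)
    (hconv : ∀ c : ℝ, Filter.Tendsto (fun n : ℕ => a n * c ^ n) Filter.atTop (nhds 0))
    (b : ℝ) :
    (∀ n : ℕ, Summable (fun m : ℕ => |((m + n).choose n : ℝ) * a (m + n) * b ^ m|)) ∧
    (∀ c : ℝ, Filter.Tendsto
      (fun n : ℕ => (∑' m : ℕ, ((m + n).choose n : ℝ) * a (m + n) * b ^ m) * c ^ n)
      Filter.atTop (nhds 0)) := by
  have hhalf : ‖(1 / 2 : ℝ)‖ < 1 := by rw [Real.norm_eq_abs, abs_of_nonneg (by norm_num : (0:ℝ) ≤ 1/2)]; norm_num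
  have hsum : ∀ n : ℕ, Summable (fun m : ℕ => |((m + n).choose n : ℝ) * a (m + n) * b ^ m|) := by
    intro n
    obtain ⟨M, hM0, hM⟩ := key_bound a hconv b 0
    refine Summable.of_nonneg_of_le (fun m => abs_nonneg _) (fun m => hM n m) ?_
    exact ((summable_geometric_of_norm_lt_one hhalf).mul_left M).mul_right _
  refine ⟨hsum, fun c => ?_⟩
  obtain ⟨M, hM0, hM⟩ := key_bound a hconv b c
  set q : ℝ := 1 / (2 * (|c| + 1)) with hq
  have hq0 : 0 ≤ q := by positivity
  have htsum_le : ∀ n : ℕ,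
      |∑' m : ℕ, ((m + n).choose n : ℝ) * a (m + n) * b ^ m| ≤ 2 * M * q ^ n := by
    intro n
    have h1 : |∑' m : ℕ, ((m + n).choose n : ℝ) * a (m + n) * b ^ m| ≤
        ∑' m : ℕ, |((m + n).choose n : ℝ) * a (m + n) * b ^ m| := by
      have hns : Summable (fun m : ℕ => ‖((m + n).choose n : ℝ) * a (m + n) * b ^ m‖) :=
        (hsum n).congr fun m => (Real.norm_eq_abs _).symm
      have := norm_tsum_le_tsum_norm hns
      simp only [Real.norm_eq_abs] at this
      exact this
    have hsg : Summable (fun m : ℕ => M * q ^ n * (1 / 2 : ℝ) ^ m) :=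
      (summable_geometric_of_norm_lt_one hhalf).mul_left _
    have h2 : ∑' m : ℕ, |((m + n).choose n : ℝ) * a (m + n) * b ^ m| ≤
        ∑' m : ℕ, M * q ^ n * (1 / 2 : ℝ) ^ m := by
      refine Summable.tsum_le_tsum (fun m => ?_) (hsum n) hsg
      calc |((m + n).choose n : ℝ) * a (m + n) * b ^ m| ≤ M * (1 / 2) ^ m * q ^ n := hM n m
        _ = M * q ^ n * (1 / 2) ^ m := by ring
    have h3 : ∑' m : ℕ, M * q ^ n * (1 / 2 : ℝ) ^ m = M * q ^ n * 2 := by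
      rw [tsum_mul_left, tsum_geometric_of_lt_one (by norm_num) (by norm_num)]
      norm_num
    calc |∑' m : ℕ, ((m + n).choose n : ℝ) * a (m + n) * b ^ m|
        ≤ ∑' m : ℕ, M * q ^ n * (1 / 2 : ℝ) ^ m := h1.trans h2
      _ = 2 * M * q ^ n := by rw [h3]; ring
  have hqc : q * |c| ≤ 1 / 2 := by
    rw [hq]
    rw [div_mul_eq_mul_div, one_mul, div_le_div_iff₀ (by positivity) (by norm_num)]
    have := abs_nonneg c
    nlinarith
  refine squeeze_zero_norm (a := fun n => 2 * M * (1 / 2) ^ n) (fun n => ?_) ?_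
  · show ‖(∑' m : ℕ, ((m + n).choose n : ℝ) * a (m + n) * b ^ m) * c ^ n‖ ≤ 2 * M * (1 / 2) ^ n
    rw [Real.norm_eq_abs, abs_mul, abs_pow]
    calc |∑' m : ℕ, ((m + n).choose n : ℝ) * a (m + n) * b ^ m| * |c| ^ n
        ≤ 2 * M * q ^ n * |c| ^ n := by
          gcongr
          exact htsum_le n
      _ = 2 * M * (q * |c|) ^ n := by rw [mul_pow]; ring
      _ ≤ 2 * M * (1 / 2) ^ n := by
          gcongr <;> first | positivity | exact hqc
  · have : Filter.Tendsto (fun n : ℕ => (1 / 2 : ℝ) ^ n) Filter.atTop (nhds 0) :=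
      tendsto_pow_atTop_nhds_zero_of_lt_one (by norm_num) (by norm_num)
    simpa using this.const_mul (2 * M)
end

section
/- Let f = Σ_{n≥0} aₙxⁿ be a convergent real formal power series and let c, d ∈ ℝ. Then shifting f first by c and then by d equals shifting f by c + d: for every n ∈ ℕ₀, Σ_{m≥n} C(m,n)·(Σ_{l≥m} C(l,m)·a_l·c^{l−m})·d^{m−n} = Σ_{l≥n} C(l,n)·a_l·(c+d)^{l−n}. -/
/-!
Consider the double series `Σ_{m,l} C(m+n,n) C(l+m+n,m+n) a_{l+m+n} c^l d^m`, whose sum over `l`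
first is the left-hand side. On the antidiagonal `m + l = k`, the identity
`C(m+n,n) C(k+n,m+n) = C(k+n,n) C(k,m)` and the binomial theorem collapse its terms to
`C(k+n,n) a_{k+n} (c+d)^k`, the `k`-th term of the right-hand side. The same computation for
`|a|, |c|, |d|` gives `C(k+n,n) |a_{k+n}| (|c|+|d|)^k`, summable in `k` because `f` is convergent
(`C(k+n,n) ≤ 2^(k+n)` is absorbed by a geometric factor). So the double series converges
absolutely and may be summed along antidiagonals instead.
-/

open Filter Finset Asymptotics Topology

theorem Summable.tsum_eq_tsum_sum_antidiagonal {α : Type*} [AddCommMonoid α] [TopologicalSpace α]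
    [ContinuousAdd α] [T3Space α] {F : ℕ × ℕ → α} (hF : Summable F) :
    ∑' p, F p = ∑' k, ∑ p ∈ antidiagonal k, F p := by
  have hσ := HasAntidiagonal.sigmaAntidiagonalEquivProd.summable_iff.mpr hF
  rw [← HasAntidiagonal.sigmaAntidiagonalEquivProd.tsum_eq F]
  refine (hσ.tsum_sigma' fun _ ↦ (hasSum_fintype _).summable).trans ?_
  exact tsum_congr fun k ↦ tsum_subtype (antidiagonal k) F

theorem summable_of_nonneg_of_summable_sum_antidiagonal {F : ℕ × ℕ → ℝ} (hF : 0 ≤ F)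
    (h : Summable fun k ↦ ∑ p ∈ antidiagonal k, F p) : Summable F := by
  rw [← HasAntidiagonal.sigmaAntidiagonalEquivProd.summable_iff]
  refine (summable_sigma_of_nonneg fun _ ↦ hF _).mpr ⟨fun _ ↦ (hasSum_fintype _).summable, ?_⟩
  simp only [tsum_fintype, HasAntidiagonal.sigmaAntidiagonalEquivProd_apply]
  simpa only [← sum_coe_sort (antidiagonal _)] using h

theorem Nat.choose_add_mul_choose_add (l m n : ℕ) :
    (m + n).choose n * (l + (m + n)).choose (m + n) = (m + l + n).choose n * (m + l).choose m := by
  rw [mul_comm, Nat.choose_mul (Nat.le_add_left n m)]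
  congr 2 <;> omega

def IsConvergent (a : ℕ → ℝ) : Prop :=
  ∀ c : ℝ, Tendsto (fun n ↦ a n * c ^ n) atTop (𝓝 0)

namespace IsConvergent

variable {a : ℕ → ℝ} (ha : IsConvergent a)
include ha

theorem abs : IsConvergent fun n ↦ |a n| := fun c ↦ by
  have h := ha c
  rw [tendsto_zero_iff_abs_tendsto_zero] at h ⊢
  simpa only [Function.comp_def, abs_mul, abs_abs] using h

theorem summable_mul_pow (t : ℝ) : Summable fun n ↦ a n * t ^ n := by
  have hbdd : (fun n ↦ a n * (2 * t) ^ n) =O[atTop] (fun _ ↦ (1 : ℝ)) := (ha (2 * t)).isBigO_one ℝ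
  refine summable_of_isBigO_nat summable_geometric_two <|
    (hbdd.mul (isBigO_refl (fun n ↦ (1 / 2 : ℝ) ^ n) atTop)).congr (fun n ↦ ?_) (fun n ↦ one_mul _)
  rw [mul_assoc, ← mul_pow, mul_right_comm, mul_one_div_cancel two_ne_zero, one_mul]

theorem summable_choose_mul_add (n : ℕ) (t : ℝ) :
    Summable fun k ↦ ((k + n).choose n : ℝ) * a (k + n) * t ^ k := by
  set s := |t| + 1
  have hs : 1 ≤ s := le_add_of_nonneg_left (abs_nonneg t)
  have hmajor : Summable fun k ↦ |a (k + n)| * (2 * s) ^ (k + n) :=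
    (summable_nat_add_iff n).mpr (ha.abs.summable_mul_pow (2 * s))
  refine Summable.of_norm_bounded hmajor fun k ↦ ?_
  have hchoose : ((k + n).choose n : ℝ) ≤ 2 ^ (k + n) := mod_cast Nat.choose_le_two_pow _ _
  have ht : |t| ^ k ≤ s ^ (k + n) :=
    (pow_le_pow_left₀ (abs_nonneg t) (le_add_of_nonneg_right zero_le_one) k).trans
      (pow_le_pow_right₀ hs (Nat.le_add_right k n))
  calc ‖((k + n).choose n : ℝ) * a (k + n) * t ^ k‖
      = ((k + n).choose n : ℝ) * |a (k + n)| * |t| ^ k := by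
        rw [Real.norm_eq_abs, abs_mul, abs_mul, abs_pow, Nat.abs_cast]
    _ ≤ 2 ^ (k + n) * |a (k + n)| * s ^ (k + n) := by gcongr
    _ = |a (k + n)| * (2 * s) ^ (k + n) := by rw [mul_pow]; ring

end IsConvergent

-- The term of the left-hand double series of `shift_shift` indexed by `p = (m, l)`.
def shiftShiftTerm (a : ℕ → ℝ) (c d : ℝ) (n : ℕ) (p : ℕ × ℕ) : ℝ :=
  ((p.1 + n).choose n : ℝ) * ((p.2 + (p.1 + n)).choose (p.1 + n) : ℝ) * a (p.2 + (p.1 + n)) *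
    c ^ p.2 * d ^ p.1

theorem sum_antidiagonal_shiftShiftTerm (a : ℕ → ℝ) (c d : ℝ) (n k : ℕ) :
    ∑ p ∈ antidiagonal k, shiftShiftTerm a c d n p =
      ((k + n).choose n : ℝ) * a (k + n) * (c + d) ^ k := by
  have hterm : ∀ p ∈ antidiagonal k, shiftShiftTerm a c d n p =
      ((k + n).choose n : ℝ) * a (k + n) * (k.choose p.1 • (d ^ p.1 * c ^ p.2)) := by
    rintro ⟨m, l⟩ hp
    rw [HasAntidiagonal.mem_antidiagonal] at hp
    subst hp
    have hchoose : ((m + n).choose n : ℝ) * ((l + (m + n)).choose (m + n) : ℝ) =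
        ((m + l + n).choose n : ℝ) * ((m + l).choose m : ℝ) :=
      mod_cast Nat.choose_add_mul_choose_add l m n
    dsimp only [shiftShiftTerm]
    rw [nsmul_eq_mul, hchoose, show l + (m + n) = m + l + n by ring]
    ring
  rw [sum_congr rfl hterm, ← mul_sum, add_comm c d, (Commute.all d c).add_pow']

theorem norm_shiftShiftTerm (a : ℕ → ℝ) (c d : ℝ) (n : ℕ) (p : ℕ × ℕ) :
    ‖shiftShiftTerm a c d n p‖ = shiftShiftTerm (fun k ↦ |a k|) |c| |d| n p := by
  simp only [shiftShiftTerm, Real.norm_eq_abs, abs_mul, abs_pow, Nat.abs_cast]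

theorem IsConvergent.summable_shiftShiftTerm {a : ℕ → ℝ} (ha : IsConvergent a) (c d : ℝ)
    (n : ℕ) : Summable (shiftShiftTerm a c d n) := by
  refine .of_norm (summable_of_nonneg_of_summable_sum_antidiagonal (fun p ↦ norm_nonneg _) ?_)
  simp only [norm_shiftShiftTerm, sum_antidiagonal_shiftShiftTerm]
  exact ha.abs.summable_choose_mul_add n _

/-- Shifting a convergent `f = Σ aₙxⁿ` first by `c` and then by `d` equals
shifting by `c + d`: for every `n`,
`Σ_{m≥n} C(m,n)·(Σ_{l≥m} C(l,m)·a_l·c^{l−m})·d^{m−n}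
  = Σ_{l≥n} C(l,n)·a_l·(c+d)^{l−n}`. -/
theorem shift_shift (a : ℕ → ℝ)
    (hconv : ∀ c : ℝ, Filter.Tendsto (fun n : ℕ => a n * c ^ n) Filter.atTop (nhds 0))
    (c d : ℝ) :
    ∀ n : ℕ,
      (∑' m : ℕ, ((m + n).choose n : ℝ) *
          (∑' l : ℕ, ((l + (m + n)).choose (m + n) : ℝ) * a (l + (m + n)) * c ^ l) * d ^ m)
        = ∑' l : ℕ, ((l + n).choose n : ℝ) * a (l + n) * (c + d) ^ l := by
  intro n
  have hF : Summable (shiftShiftTerm a c d n) := IsConvergent.summable_shiftShiftTerm hconv c d n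
  have hrow : ∀ m : ℕ, ((m + n).choose n : ℝ) *
      (∑' l : ℕ, ((l + (m + n)).choose (m + n) : ℝ) * a (l + (m + n)) * c ^ l) * d ^ m =
        ∑' l : ℕ, shiftShiftTerm a c d n (m, l) := fun m ↦ by
    rw [← tsum_mul_left, ← tsum_mul_right]
    exact tsum_congr fun l ↦ by simp only [shiftShiftTerm]; ring
  calc _ = ∑' m : ℕ, ∑' l : ℕ, shiftShiftTerm a c d n (m, l) := tsum_congr hrow
    _ = ∑' p, shiftShiftTerm a c d n p := (hF.tsum_prod' hF.prod_factor).symm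
    _ = ∑' k, ∑ p ∈ antidiagonal k, shiftShiftTerm a c d n p := hF.tsum_eq_tsum_sum_antidiagonal
    _ = _ := tsum_congr (sum_antidiagonal_shiftShiftTerm a c d n)
end

section
/- Let n ∈ ℕ, let a₀, a₁, …, aₙ be integers with a₀ ≠ 0, and for r ∈ ℕ define the polynomial p_r(x) = x^r·((x−1)(x−2)⋯(x−n))^{r+1} ∈ ℤ[x] and the number B_r = Σ_{j=0}^{n} a_j·∫_0^{+∞} p_r(x+j)·e^{−x} dx. Then B_r is an integer divisible by r!, and moreover B_r = ±a₀·(n!)^{r+1}·r! + m·(r+1)! for some integer m; consequently, if r+1 is coprime to a₀·n!, then B_r ≠ 0. In particular, B_r ≠ 0 for infinitely many r ∈ ℕ. -/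
open Finset MeasureTheory Polynomial

noncomputable def Jint (q : Polynomial ℤ) : ℤ := q.sum (fun k c => c * k.factorial)

lemma Jint_add (p q : Polynomial ℤ) : Jint (p + q) = Jint p + Jint q := by
  unfold Jint
  apply Polynomial.sum_add_index <;> intros <;> ring

lemma Jint_monomial (k : ℕ) (c : ℤ) : Jint (monomial k c) = c * k.factorial := by
  unfold Jint
  apply Polynomial.sum_monomial_index
  simp

lemma integrableOn_pow_exp (k : ℕ) :
    IntegrableOn (fun x : ℝ => x ^ k * Real.exp (-x)) (Set.Ioi 0) := by
  have h := Real.GammaIntegral_convergent (s := k + 1) (by positivity)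
  apply (h.congr_fun ?_ measurableSet_Ioi)
  intro x hx
  show Real.exp (-x) * x ^ ((k:ℝ) + 1 - 1) = x ^ k * Real.exp (-x)
  rw [add_sub_cancel_right, Real.rpow_natCast, mul_comm]

lemma integral_pow_exp (k : ℕ) :
    ∫ x in Set.Ioi (0:ℝ), x ^ k * Real.exp (-x) = k.factorial := by
  have h := Real.Gamma_eq_integral (s := (k:ℝ) + 1) (by positivity)
  rw [show ((k:ℝ)+1) = ((k:ℕ):ℝ) + 1 by norm_num] at h
  rw [Real.Gamma_nat_eq_factorial] at h
  rw [show ∫ x in Set.Ioi (0:ℝ), x ^ k * Real.exp (-x)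
      = ∫ x in Set.Ioi (0:ℝ), Real.exp (-x) * x ^ (((k:ℕ):ℝ) + 1 - 1) from ?_, ← h]
  apply setIntegral_congr_fun measurableSet_Ioi
  intro x hx
  show x ^ k * Real.exp (-x) = Real.exp (-x) * x ^ ((k:ℝ) + 1 - 1)
  rw [add_sub_cancel_right, Real.rpow_natCast, mul_comm]

lemma integrableOn_aeval_exp (q : Polynomial ℤ) :
    IntegrableOn (fun x : ℝ => (aeval x q) * Real.exp (-x)) (Set.Ioi 0) := by
  induction q using Polynomial.induction_on' with
  | add p q hp hq =>
    have h2 : IntegrableOn (fun x : ℝ => (aeval x p) * Real.exp (-x)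
        + (aeval x q) * Real.exp (-x)) (Set.Ioi 0) := hp.add hq
    apply h2.congr_fun ?_ measurableSet_Ioi
    intro x _
    simp [add_mul]
  | monomial k c =>
    have h2 : IntegrableOn (fun x : ℝ => (c:ℝ) * (x ^ k * Real.exp (-x)))
        (Set.Ioi 0) := (integrableOn_pow_exp k).const_mul (c : ℝ)
    apply h2.congr_fun ?_ measurableSet_Ioi
    intro x _
    simp [aeval_monomial, mul_assoc]

lemma integral_aeval_exp (q : Polynomial ℤ) :
    ∫ x in Set.Ioi (0:ℝ), (aeval x q) * Real.exp (-x) = (Jint q : ℝ) := by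
  induction q using Polynomial.induction_on' with
  | add p q hp hq =>
    rw [Jint_add]
    push_cast
    rw [← hp, ← hq, ← integral_add (integrableOn_aeval_exp p) (integrableOn_aeval_exp q)]
    apply setIntegral_congr_fun measurableSet_Ioi
    intro x _
    simp [add_mul]
  | monomial k c =>
    rw [Jint_monomial]
    push_cast
    have hcong : ∫ x in Set.Ioi (0:ℝ), (aeval x (monomial k c)) * Real.exp (-x)
        = ∫ x in Set.Ioi (0:ℝ), (c:ℝ) * (x ^ k * Real.exp (-x)) := by
      apply setIntegral_congr_fun measurableSet_Ioi
      intro x _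
      simp [aeval_monomial, mul_assoc]
    rw [hcong, integral_const_mul, integral_pow_exp]

lemma Jint_dvd (r : ℕ) (q : Polynomial ℤ) (h : X ^ (r+1) ∣ q) :
    ((r+1).factorial : ℤ) ∣ Jint q := by
  unfold Jint Polynomial.sum
  apply Finset.dvd_sum
  intro k hk
  have hk' : ¬ k < r + 1 := by
    intro hlt
    exact Polynomial.mem_support_iff.mp hk (Polynomial.X_pow_dvd_iff.mp h k hlt)
  exact Dvd.dvd.mul_left (Int.natCast_dvd_natCast.mpr
    (Nat.factorial_dvd_factorial (not_lt.mp hk'))) _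

lemma Jint_X_pow_mul (r : ℕ) (q : Polynomial ℤ) :
    ∃ m : ℤ, Jint (X ^ r * q) = q.coeff 0 * r.factorial + m * (r+1).factorial := by
  have hq : X ^ r * q = X ^ (r+1) * q.divX + monomial r (q.coeff 0) := by
    conv_lhs => rw [← Polynomial.X_mul_divX_add q]
    rw [← Polynomial.C_mul_X_pow_eq_monomial]
    ring
  obtain ⟨m, hm⟩ := Jint_dvd r (X ^ (r+1) * q.divX) (dvd_mul_right _ _)
  refine ⟨m, ?_⟩
  rw [hq, Jint_add, Jint_monomial, hm]
  ring

/-- Properties of `B_r = Σ_{j=0}^{n} aⱼ·∫_0^{+∞} p_r(x+j)·e^{−x} dx` with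
`p_r(x) = x^r·((x−1)⋯(x−n))^{r+1}` and `a₀ ≠ 0`: `B_r` is an integer of the
form `±a₀·(n!)^{r+1}·r! + m·(r+1)!` (hence divisible by `r!`), it is nonzero
whenever `r+1` is coprime to `a₀·n!`, and it is nonzero for infinitely many
`r ∈ ℕ`. -/
theorem B_r_properties (n : ℕ) (hn : 1 ≤ n) (a : ℕ → ℤ) (ha : a 0 ≠ 0)
    (B : ℕ → ℝ)
    (hB : ∀ r : ℕ, B r = ∑ j ∈ Finset.range (n + 1), (a j : ℝ) *
      ∫ x in Set.Ioi (0 : ℝ),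
        ((x + j) ^ r * (∏ i ∈ Finset.Icc 1 n, (x + j - i)) ^ (r + 1)) * Real.exp (-x)) :
    (∀ r : ℕ, 1 ≤ r → ∃ ε : ℤ, (ε = 1 ∨ ε = -1) ∧ ∃ m : ℤ,
        B r = ((ε * a 0 * (n.factorial : ℤ) ^ (r + 1) * r.factorial
          + m * (r + 1).factorial : ℤ) : ℝ)) ∧
    (∀ r : ℕ, 1 ≤ r → ∃ z : ℤ, B r = (z : ℝ) ∧ (r.factorial : ℤ) ∣ z) ∧
    (∀ r : ℕ, 1 ≤ r → IsCoprime ((r : ℤ) + 1) (a 0 * n.factorial) → B r ≠ 0) ∧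
    {r : ℕ | 1 ≤ r ∧ B r ≠ 0}.Infinite := by
  classical
  set Q : ℕ → ℕ → Polynomial ℤ := fun r j =>
    (X + C (j:ℤ))^r * (∏ i ∈ Finset.Icc 1 n, (X + C (j:ℤ) - C (i:ℤ)))^(r+1) with hQ
  -- B r is the integer ∑ aⱼ · Jint (Q r j)
  have hBz : ∀ r, B r = ((∑ j ∈ Finset.range (n+1), a j * Jint (Q r j) : ℤ) : ℝ) := by
    intro r
    rw [hB r]
    push_cast
    apply Finset.sum_congr rfl
    intro j _
    congr 1
    rw [← integral_aeval_exp]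
    apply setIntegral_congr_fun measurableSet_Ioi
    intro x _
    simp only [hQ, map_mul, map_pow, map_add, map_sub, map_prod, aeval_X, aeval_C,
      algebraMap_int_eq, eq_intCast, Int.cast_natCast, map_natCast]
  -- key decomposition
  have key : ∀ r : ℕ, 1 ≤ r → ∃ ε : ℤ, (ε = 1 ∨ ε = -1) ∧ ∃ m : ℤ,
      (∑ j ∈ Finset.range (n+1), a j * Jint (Q r j))
        = ε * a 0 * (n.factorial : ℤ) ^ (r + 1) * r.factorial + m * (r + 1).factorial := by
    intro r _
    -- terms with j ≥ 1 are divisible by (r+1)!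
    have hdvd : ((r+1).factorial : ℤ) ∣
        ∑ j ∈ Finset.range n, a (j+1) * Jint (Q r (j+1)) := by
      apply Finset.dvd_sum
      intro j hj
      have hmem : j + 1 ∈ Finset.Icc 1 n := by
        simp only [Finset.mem_Icc]
        exact ⟨Nat.le_add_left 1 j, Finset.mem_range.mp hj⟩
      have hX : (X : Polynomial ℤ) ∣
          ∏ i ∈ Finset.Icc 1 n, (X + C ((j+1:ℕ):ℤ) - C (i:ℤ)) := by
        have heq : (X + C ((j+1:ℕ):ℤ) - C (((j+1:ℕ)):ℤ)) = (X : Polynomial ℤ) := by ring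
        have h2 := Finset.dvd_prod_of_mem
          (fun i => (X + C ((j+1:ℕ):ℤ) - C ((i:ℕ):ℤ))) hmem
        simpa only [heq] using h2
      have hXQ : (X : Polynomial ℤ) ^ (r+1) ∣ Q r (j+1) :=
        Dvd.dvd.mul_left (pow_dvd_pow_of_dvd hX (r+1)) _
      exact (Jint_dvd r _ hXQ).mul_left _
    obtain ⟨m1, hm1⟩ := hdvd
    -- the j = 0 term
    have hQ0 : Q r 0 = X ^ r * (∏ i ∈ Finset.Icc 1 n, (X - C (i:ℤ)))^(r+1) := by
      simp [hQ]
    obtain ⟨m0, hm0⟩ := Jint_X_pow_mul r ((∏ i ∈ Finset.Icc 1 n, (X - C (i:ℤ)))^(r+1))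
    have hprod : (∏ i ∈ Finset.Icc 1 n, ((0:ℤ) - (i:ℤ)))
        = (-1)^n * (n.factorial : ℤ) := by
      have h1 : ∀ i ∈ Finset.Icc 1 n, ((0:ℤ) - (i:ℤ)) = (-1) * (i:ℤ) := by
        intro i _; ring
      have hfact : (∏ i ∈ Finset.Icc 1 n, (i:ℤ)) = (n.factorial : ℤ) := by
        rw [← Nat.cast_prod]
        congr 1
        rw [← Finset.Ico_add_one_right_eq_Icc]
        exact Finset.prod_Ico_id_eq_factorial n
      rw [Finset.prod_congr rfl h1, Finset.prod_mul_distrib, Finset.prod_const,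
        Nat.card_Icc, hfact, Nat.add_sub_cancel]
    have hcoeff0 : ((∏ i ∈ Finset.Icc 1 n, (X - C (i:ℤ)))^(r+1)).coeff 0
        = ((-1:ℤ)^n)^(r+1) * (n.factorial : ℤ)^(r+1) := by
      rw [Polynomial.coeff_zero_eq_eval_zero]
      simp only [eval_pow, eval_prod, eval_sub, eval_X, eval_C]
      rw [hprod, mul_pow]
    refine ⟨((-1:ℤ)^n)^(r+1), ?_, m1 + a 0 * m0, ?_⟩
    · rcases Nat.even_or_odd (n * (r+1)) with h | h
      · left; rw [← pow_mul]; exact h.neg_one_pow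
      · right; rw [← pow_mul]; exact h.neg_one_pow
    · rw [Finset.sum_range_succ', hm1, hQ0, hm0, hcoeff0]
      ring
  have part3 : ∀ r : ℕ, 1 ≤ r → IsCoprime ((r : ℤ) + 1) (a 0 * n.factorial) → B r ≠ 0 := by
    intro r hr hcop hB0
    obtain ⟨ε, hε, m, hm⟩ := key r hr
    rw [hBz r, hm] at hB0
    have hz : ε * a 0 * (n.factorial : ℤ) ^ (r + 1) * r.factorial
        + m * (r + 1).factorial = 0 := by exact_mod_cast hB0
    have hfac : ((r+1).factorial : ℤ) = ((r:ℤ)+1) * r.factorial := by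
      rw [Nat.factorial_succ]; push_cast; ring
    have h1 : ε * a 0 * (n.factorial : ℤ) ^ (r + 1) + m * ((r:ℤ)+1) = 0 := by
      have hfne : (r.factorial : ℤ) ≠ 0 := by exact_mod_cast r.factorial_ne_zero
      apply mul_right_cancel₀ hfne
      rw [hfac] at hz
      linarith [hz]
    have hdvd : ((r:ℤ)+1) ∣ ε * (a 0 * (n.factorial : ℤ) ^ (r + 1)) := by
      refine ⟨-m, ?_⟩
      linarith [h1]
    have hcop2 : IsCoprime ((r:ℤ)+1) (ε * (a 0 * (n.factorial : ℤ) ^ (r + 1))) := by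
      have hc1 : IsCoprime ((r:ℤ)+1) (a 0) := hcop.of_mul_right_left
      have hc2 : IsCoprime ((r:ℤ)+1) ((n.factorial : ℤ)^(r+1)) :=
        hcop.of_mul_right_right.pow_right
      have hcε : IsCoprime ((r:ℤ)+1) ε := by
        rcases hε with h | h <;> subst h
        · exact isCoprime_one_right
        · exact isCoprime_one_right.neg_right
      exact hcε.mul_right (hc1.mul_right hc2)
    have hu : IsUnit ((r:ℤ)+1) := hcop2.isUnit_of_dvd' dvd_rfl hdvd
    rcases Int.isUnit_iff.mp hu with h | h <;> omega
  refine ⟨?_, ?_, part3, ?_⟩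
  · intro r hr
    obtain ⟨ε, hε, m, hm⟩ := key r hr
    exact ⟨ε, hε, m, by rw [hBz r, hm]⟩
  · intro r hr
    obtain ⟨ε, hε, m, hm⟩ := key r hr
    refine ⟨_, hBz r, ?_⟩
    rw [hm]
    apply dvd_add
    · exact dvd_mul_left _ _
    · refine Dvd.dvd.mul_left ?_ m
      exact_mod_cast Nat.factorial_dvd_factorial (Nat.le_succ r)
  · -- infinitely many
    have hane : a 0 * (n.factorial : ℤ) ≠ 0 :=
      mul_ne_zero ha (by exact_mod_cast n.factorial_ne_zero)
    by_contra hfin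
    rw [Set.not_infinite] at hfin
    obtain ⟨N, hN⟩ := hfin.bddAbove
    obtain ⟨p, hpge, hp⟩ := Nat.exists_infinite_primes
      (max (N + 2) ((a 0 * (n.factorial : ℤ)).natAbs + 1))
    have hge1 : N + 2 ≤ p := le_trans (le_max_left _ _) hpge
    have hge2 : (a 0 * (n.factorial : ℤ)).natAbs + 1 ≤ p :=
      le_trans (le_max_right _ _) hpge
    set r := p - 1 with hr
    have hrp : r + 1 = p := by omega
    have hr1 : 1 ≤ r := by omega
    have hcop : IsCoprime ((r : ℤ) + 1) (a 0 * n.factorial) := by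
      have hcast : ((r : ℤ) + 1) = (p : ℤ) := by exact_mod_cast congrArg (Nat.cast : ℕ → ℤ) hrp
      rw [hcast, Int.isCoprime_iff_gcd_eq_one]
      have hgcd : Int.gcd (p : ℤ) (a 0 * n.factorial)
          = Nat.gcd p (a 0 * (n.factorial : ℤ)).natAbs := by
        rw [Int.gcd, Int.natAbs_natCast]
      rw [hgcd]
      refine (Nat.Prime.coprime_iff_not_dvd hp).mpr ?_
      intro hdvd
      have hle := Nat.le_of_dvd (Int.natAbs_pos.mpr hane) hdvd
      omega
    have hmem : r ∈ {r : ℕ | 1 ≤ r ∧ B r ≠ 0} := ⟨hr1, part3 r hr1 hcop⟩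
    have := hN hmem
    omega
end

section
/- Let n ∈ ℕ and let a₀, a₁, …, aₙ be integers, and for r ∈ ℕ define the polynomial p_r(x) = x^r·((x−1)(x−2)⋯(x−n))^{r+1} and the number A_r = Σ_{j=0}^{n} a_j·e^{j}·∫_0^{j} p_r(x)·e^{−x} dx. Then there exists a constant c ≥ 1, depending only on n and a₀, …, aₙ, such that |A_r| ≤ c^{r} for every r ∈ ℕ. -/
open Finset MeasureTheory intervalIntegral

/-- Exponential bound on `A_r = Σ_{j=0}^{n} aⱼ·e^j·∫_0^j p_r(x)·e^{−x} dx`,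
with `p_r(x) = x^r·((x−1)⋯(x−n))^{r+1}`: there is a constant `c ≥ 1`,
depending only on `n` and `a₀, …, aₙ`, with `|A_r| ≤ c^r` for all `r ≥ 1`. -/
theorem A_r_bound (n : ℕ) (hn : 1 ≤ n) (a : ℕ → ℤ)
    (A : ℕ → ℝ)
    (hA : ∀ r : ℕ, A r = ∑ j ∈ Finset.range (n + 1), (a j : ℝ) * Real.exp j *
      ∫ x in (0 : ℝ)..(j : ℝ),
        (x ^ r * (∏ i ∈ Finset.Icc 1 n, (x - i)) ^ (r + 1)) * Real.exp (-x)) :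
    ∃ c : ℝ, 1 ≤ c ∧ ∀ r : ℕ, 1 ≤ r → |A r| ≤ c ^ r := by
  have hN : (1:ℝ) ≤ (n:ℝ) := by exact_mod_cast hn
  have hN0 : (0:ℝ) ≤ (n:ℝ) := by linarith
  set D : ℝ := (n:ℝ) ^ (n+1) with hDdef
  have hD : 1 ≤ D := one_le_pow₀ hN
  set S : ℝ := ∑ j ∈ Finset.range (n+1), |(a j : ℝ)| * Real.exp j with hSdef
  have hS : 0 ≤ S :=
    Finset.sum_nonneg fun j _ => mul_nonneg (abs_nonneg _) (Real.exp_pos _).le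
  refine ⟨(S * D + 1) * D, by nlinarith [mul_nonneg hS (le_trans zero_le_one hD)], ?_⟩
  intro r hr
  have hC0 : (0:ℝ) ≤ (n:ℝ)^r * ((n:ℝ)^n)^(r+1) := by positivity
  have key : ∀ j ∈ Finset.range (n+1),
      |∫ x in (0:ℝ)..(j:ℝ), (x ^ r * (∏ i ∈ Finset.Icc 1 n, (x - (i:ℝ))) ^ (r + 1)) * Real.exp (-x)|
        ≤ (n:ℝ)^r * ((n:ℝ)^n)^(r+1) * n := by
    intro j hj
    have hjn : (j:ℝ) ≤ n := by
      have := Finset.mem_range.mp hj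
      exact_mod_cast Nat.lt_succ_iff.mp this
    have hj0 : (0:ℝ) ≤ (j:ℝ) := Nat.cast_nonneg j
    have hb : ∀ x ∈ Set.uIoc (0:ℝ) (j:ℝ),
        ‖(x ^ r * (∏ i ∈ Finset.Icc 1 n, (x - (i:ℝ))) ^ (r + 1)) * Real.exp (-x)‖
          ≤ (n:ℝ)^r * ((n:ℝ)^n)^(r+1) := by
      intro x hx
      rw [Set.uIoc_of_le hj0] at hx
      obtain ⟨hx0, hxj⟩ := hx
      have hxn : x ≤ n := le_trans hxj hjn
      have hprod : |∏ i ∈ Finset.Icc 1 n, (x - (i:ℝ))| ≤ (n:ℝ)^n := by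
        rw [Finset.abs_prod]
        calc ∏ i ∈ Finset.Icc 1 n, |x - (i:ℝ)| ≤ ∏ _i ∈ Finset.Icc 1 n, (n:ℝ) := by
              apply Finset.prod_le_prod (fun i _ => abs_nonneg _)
              intro i hi
              obtain ⟨hi1, hin⟩ := Finset.mem_Icc.mp hi
              have hi1' : (1:ℝ) ≤ i := by exact_mod_cast hi1
              have hin' : (i:ℝ) ≤ n := by exact_mod_cast hin
              rw [abs_le]
              constructor <;> linarith
          _ = (n:ℝ)^n := by
              rw [Finset.prod_const, Nat.card_Icc]
              norm_num
      have hexp : Real.exp (-x) ≤ 1 := Real.exp_le_one_iff.mpr (by linarith)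
      rw [Real.norm_eq_abs, abs_mul, abs_mul, abs_pow, abs_pow]
      have h1 : |x|^r ≤ (n:ℝ)^r :=
        pow_le_pow_left₀ (abs_nonneg _) (by rw [abs_of_pos hx0]; exact hxn) r
      have h2 : |∏ i ∈ Finset.Icc 1 n, (x - (i:ℝ))|^(r+1) ≤ ((n:ℝ)^n)^(r+1) :=
        pow_le_pow_left₀ (abs_nonneg _) hprod _
      have h3 : |Real.exp (-x)| ≤ 1 := by
        rw [abs_of_pos (Real.exp_pos _)]; exact hexp
      calc |x|^r * |∏ i ∈ Finset.Icc 1 n, (x - (i:ℝ))|^(r+1) * |Real.exp (-x)|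
          ≤ (n:ℝ)^r * ((n:ℝ)^n)^(r+1) * 1 :=
            mul_le_mul (mul_le_mul h1 h2 (by positivity) (by positivity)) h3
              (abs_nonneg _) (by positivity)
        _ = (n:ℝ)^r * ((n:ℝ)^n)^(r+1) := by ring
    have hint := intervalIntegral.norm_integral_le_of_norm_le_const hb
    rw [Real.norm_eq_abs] at hint
    have : |(j:ℝ) - 0| = (j:ℝ) := by rw [sub_zero, abs_of_nonneg hj0]
    rw [this] at hint
    calc |∫ x in (0:ℝ)..(j:ℝ), (x ^ r * (∏ i ∈ Finset.Icc 1 n, (x - (i:ℝ))) ^ (r + 1)) * Real.exp (-x)|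
        ≤ (n:ℝ)^r * ((n:ℝ)^n)^(r+1) * j := hint
      _ ≤ (n:ℝ)^r * ((n:ℝ)^n)^(r+1) * n := by
          exact mul_le_mul_of_nonneg_left hjn hC0
  have hpow : (n:ℝ)^r * ((n:ℝ)^n)^(r+1) * (n:ℝ) = D^r * D := by
    rw [hDdef, ← pow_mul, ← pow_mul,
      show (n:ℝ)^r * (n:ℝ)^(n*(r+1)) * (n:ℝ) = (n:ℝ)^(r + n*(r+1) + 1) from by
        rw [pow_add, pow_add, pow_one],
      ← pow_add]
    congr 1
    ring
  have hAr : |A r| ≤ S * (D^r * D) := by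
    rw [hA r]
    calc |∑ j ∈ Finset.range (n+1), (a j : ℝ) * Real.exp j *
          ∫ x in (0:ℝ)..(j:ℝ), (x ^ r * (∏ i ∈ Finset.Icc 1 n, (x - (i:ℝ))) ^ (r + 1)) * Real.exp (-x)|
        ≤ ∑ j ∈ Finset.range (n+1), |(a j : ℝ) * Real.exp j *
          ∫ x in (0:ℝ)..(j:ℝ), (x ^ r * (∏ i ∈ Finset.Icc 1 n, (x - (i:ℝ))) ^ (r + 1)) * Real.exp (-x)| :=
          Finset.abs_sum_le_sum_abs _ _
      _ ≤ ∑ j ∈ Finset.range (n+1), |(a j : ℝ)| * Real.exp j * ((n:ℝ)^r * ((n:ℝ)^n)^(r+1) * n) := by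
          apply Finset.sum_le_sum
          intro j hj
          rw [abs_mul, abs_mul, abs_of_pos (Real.exp_pos _)]
          exact mul_le_mul_of_nonneg_left (key j hj)
            (mul_nonneg (abs_nonneg _) (Real.exp_pos _).le)
      _ = S * ((n:ℝ)^r * ((n:ℝ)^n)^(r+1) * n) := by
          rw [hSdef, Finset.sum_mul]
      _ = S * (D^r * D) := by rw [hpow]
  have hSD : S * D ≤ (S * D + 1)^r := by
    calc S * D ≤ S * D + 1 := by linarith
      _ ≤ (S * D + 1)^r := le_self_pow₀ (by nlinarith [mul_nonneg hS (le_trans zero_le_one hD)]) (by omega)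
  calc |A r| ≤ S * (D^r * D) := hAr
    _ = (S * D) * D^r := by ring
    _ ≤ (S * D + 1)^r * D^r := by
        apply mul_le_mul_of_nonneg_right hSD (by positivity)
    _ = ((S * D + 1) * D)^r := (mul_pow _ _ _).symm
end
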